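/- arXiv:1405.0736 — 8 statements merged into one kernel-verified Lean document; each statement's English description precedes it below -/
import Mathlib

section
/- Let I=[-1,1], let S : I×I → [0,1] and D̂ : I → [0,1], and let 0 < α ≤ 1. Set K₊ = inf{(1−w)/D̂(w) : w ∈ I, D̂(w) ≠ 0} and K₋ = inf{(1+w)/D̂(w) : w ∈ I, D̂(w) ≠ 0}. If the noise value θ̂ satisfies −(1−α)K₋ ≤ θ̂ ≤ (1−α)K₊, then for all w, ṽ ∈ I the post-interaction follower opinion w** = w + αS(w,ṽ)(ṽ−w) + θ̂ D̂(w) belongs to I. -/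
/-!
The compromise term moves the follower a fraction `α S ≤ α` of the way towards a leader inside
`[-1, 1]`, so it stays at distance at least `(1 - α)(1 - w)` below `1` and `(1 - α)(1 + w)` above
`-1`. The bounds on `θ̂` are designed so that the noise `θ̂ D̂(w)` never exceeds these margins:
`K₊ ≤ (1 - w) / D̂(w)` whenever `D̂(w) ≠ 0`, and the noise vanishes when `D̂(w) = 0`.
-/

open Set

theorem add_mul_sub_mem_Icc_of_mem_Icc {w v s α : ℝ} (hw : w ∈ Icc (-1 : ℝ) 1)
    (hv : v ∈ Icc (-1 : ℝ) 1) (hs : s ∈ Icc 0 α) :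
    w + s * (v - w) ∈ Icc (w - α * (1 + w)) (w + α * (1 - w)) := by
  obtain ⟨hw₁, hw₂⟩ := hw
  obtain ⟨hv₁, hv₂⟩ := hv
  obtain ⟨hs₀, hsα⟩ := hs
  constructor <;> nlinarith

theorem sInf_ratio_le {s : Set ℝ} {f g : ℝ → ℝ} (hf : ∀ u ∈ s, 0 ≤ f u)
    (hg : ∀ u ∈ s, 0 ≤ g u) {w : ℝ} (hw : w ∈ s) (hgw : g w ≠ 0) :
    sInf {x : ℝ | ∃ u ∈ s, g u ≠ 0 ∧ x = f u / g u} ≤ f w / g w := by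
  refine csInf_le ⟨0, ?_⟩ ⟨w, hw, hgw, rfl⟩
  rintro x ⟨u, hu, -, rfl⟩
  exact div_nonneg (hf u hu) (hg u hu)

theorem mul_le_mul_of_le_mul_of_le_div {θ c K a D : ℝ} (hc : 0 ≤ c) (ha : 0 ≤ a)
    (hD : 0 ≤ D) (hθ : θ ≤ c * K) (hK : D ≠ 0 → K ≤ a / D) : θ * D ≤ c * a := by
  rcases hD.eq_or_lt with rfl | hDpos
  · simpa using mul_nonneg hc ha
  calc θ * D ≤ c * K * D := mul_le_mul_of_nonneg_right hθ hDpos.le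
    _ ≤ c * (a / D) * D := by gcongr; exact hK hDpos.ne'
    _ = c * a := by field_simp

/-- bounds preservation for the leader-follower binary
interaction (Proposition 3.2 of the paper). -/
theorem follower_leader_interaction_preserves_bounds
    (S : ℝ → ℝ → ℝ) (Dh : ℝ → ℝ)
    (hS : ∀ w ∈ Icc (-1:ℝ) 1, ∀ v ∈ Icc (-1:ℝ) 1, S w v ∈ Icc (0:ℝ) 1)
    (hDh : ∀ w ∈ Icc (-1:ℝ) 1, Dh w ∈ Icc (0:ℝ) 1)
    (α : ℝ) (hα : 0 < α) (hα' : α ≤ 1)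
    (Kp Km : ℝ)
    (hKp : Kp = sInf {x : ℝ | ∃ w ∈ Icc (-1:ℝ) 1, Dh w ≠ 0 ∧ x = (1 - w)/Dh w})
    (hKm : Km = sInf {x : ℝ | ∃ w ∈ Icc (-1:ℝ) 1, Dh w ≠ 0 ∧ x = (1 + w)/Dh w})
    (θ : ℝ)
    (hθ : -((1 - α)*Km) ≤ θ ∧ θ ≤ (1 - α)*Kp) :
    ∀ w ∈ Icc (-1:ℝ) 1, ∀ v ∈ Icc (-1:ℝ) 1,
      (w + α * S w v * (v - w) + θ * Dh w) ∈ Icc (-1:ℝ) 1 := by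
  intro w hw v hv
  have hDh₀ : ∀ u ∈ Icc (-1:ℝ) 1, 0 ≤ Dh u := fun u hu ↦ (hDh u hu).1
  have hSα : α * S w v ∈ Icc 0 α := by
    obtain ⟨hS₀, hS₁⟩ := hS w hw v hv
    exact ⟨mul_nonneg hα.le hS₀, mul_le_of_le_one_right hα.le hS₁⟩
  obtain ⟨hlo, hhi⟩ := add_mul_sub_mem_Icc_of_mem_Icc hw hv hSα
  have hα₁ : 0 ≤ 1 - α := sub_nonneg.mpr hα'
  have hnoise_hi : θ * Dh w ≤ (1 - α) * (1 - w) :=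
    mul_le_mul_of_le_mul_of_le_div hα₁ (by linarith [hw.2]) (hDh₀ w hw) hθ.2 fun hD ↦
      hKp ▸ sInf_ratio_le (fun u hu ↦ by linarith [hu.2]) hDh₀ hw hD
  have hnoise_lo : -θ * Dh w ≤ (1 - α) * (1 + w) :=
    mul_le_mul_of_le_mul_of_le_div hα₁ (by linarith [hw.1]) (hDh₀ w hw)
      (neg_le.mp hθ.1) fun hD ↦
      hKm ▸ sInf_ratio_le (fun u hu ↦ by linarith [hu.1]) hDh₀ hw hD
  constructor <;> linarith
end

section
/- Consider the noise-free controlled binary interaction of two leaders (θ₁ = θ₂ = 0). Then w̃* − ṽ* = (1 − α(R(w̃,ṽ)+R(ṽ,w̃)))(w̃ − ṽ). In particular, if R takes values in [0,1], r = inf_{w̃,ṽ∈I} R(w̃,ṽ), and 0 < α ≤ 1/2, then |w̃* − ṽ*| ≤ (1 − 2αr)|w̃ − ṽ| ≤ |w̃ − ṽ|, i.e. the interaction is a contraction of the opinion distance. -/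
/-! Both leaders receive the same control, so it cancels in the difference of their
opinions, which is then simply rescaled by `1 - α (R(w̃,ṽ) + R(ṽ,w̃))`. For `R` with values
in `[r, 1]` and `0 < α ≤ 1/2` this factor lies in `[0, 1 - 2αr]`. -/

open Set

theorem sub_eq_of_common_control (w v a b α c : ℝ) :
    (w + α * a * (v - w) + c) - (v + α * b * (w - v) + c) = (1 - α * (a + b)) * (w - v) := by
  ring

theorem abs_one_sub_mul_add_mul_le {α r a b : ℝ} (hα : 0 ≤ α) (hα₂ : α ≤ 1 / 2)
    (ha : a ∈ Icc r 1) (hb : b ∈ Icc r 1) (x : ℝ) :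
    |(1 - α * (a + b)) * x| ≤ (1 - 2 * α * r) * |x| := by
  have hfac_nonneg : 0 ≤ 1 - α * (a + b) := by nlinarith [ha.2, hb.2]
  have hfac_le : 1 - α * (a + b) ≤ 1 - 2 * α * r := by nlinarith [ha.1, hb.1]
  rw [abs_mul, abs_of_nonneg hfac_nonneg]
  exact mul_le_mul_of_nonneg_right hfac_le (abs_nonneg x)

section PairwiseInf

variable {ι : Type*} {S : Set ι} {f : ι → ι → ℝ}

theorem sInf_pairwise_nonneg (hf : ∀ a ∈ S, ∀ b ∈ S, 0 ≤ f a b) :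
    0 ≤ sInf {x : ℝ | ∃ a ∈ S, ∃ b ∈ S, x = f a b} :=
  Real.sInf_nonneg fun _ ⟨a, ha, b, hb, hx⟩ => hx ▸ hf a ha b hb

theorem sInf_pairwise_le (hf : ∀ a ∈ S, ∀ b ∈ S, 0 ≤ f a b) {a b : ι} (ha : a ∈ S)
    (hb : b ∈ S) : sInf {x : ℝ | ∃ a ∈ S, ∃ b ∈ S, x = f a b} ≤ f a b :=
  csInf_le ⟨0, fun _ ⟨a, ha, b, hb, hx⟩ => hx ▸ hf a ha b hb⟩ ⟨a, ha, b, hb, rfl⟩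

end PairwiseInf

theorem leaders_interaction_contraction_general
    (R : ℝ → ℝ → ℝ) (α β ψ μ wd mF : ℝ)
    (hα : 0 < α)
    (r : ℝ) :
    ∀ w ∈ Icc (-1:ℝ) 1, ∀ v ∈ Icc (-1:ℝ) 1,
      ((w + α * R w v * (v - w)
          + (-(β/2) * (ψ*((w - wd) + (v - wd)) + μ*((w - mF) + (v - mF)))
             - (α*β/2) * (R w v - R v w) * (v - w)))
        - (v + α * R v w * (w - v)
          + (-(β/2) * (ψ*((w - wd) + (v - wd)) + μ*((w - mF) + (v - mF)))
             - (α*β/2) * (R w v - R v w) * (v - w)))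
        = (1 - α * (R w v + R v w)) * (w - v))
      ∧ ((∀ a ∈ Icc (-1:ℝ) 1, ∀ b ∈ Icc (-1:ℝ) 1, R a b ∈ Icc (0:ℝ) 1) →
          r = sInf {x : ℝ | ∃ a ∈ Icc (-1:ℝ) 1, ∃ b ∈ Icc (-1:ℝ) 1, x = R a b} →
          α ≤ 1/2 →
          |(w + α * R w v * (v - w)
              + (-(β/2) * (ψ*((w - wd) + (v - wd)) + μ*((w - mF) + (v - mF)))
                 - (α*β/2) * (R w v - R v w) * (v - w)))
            - (v + α * R v w * (w - v)
              + (-(β/2) * (ψ*((w - wd) + (v - wd)) + μ*((w - mF) + (v - mF)))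
                 - (α*β/2) * (R w v - R v w) * (v - w)))|
            ≤ (1 - 2*α*r) * |w - v|
          ∧ (1 - 2*α*r) * |w - v| ≤ |w - v|) := by
  intro w hw v hv
  refine ⟨sub_eq_of_common_control .., fun hR hr hα₂ => ?_⟩
  rw [sub_eq_of_common_control]
  have hR₀ : ∀ a ∈ Icc (-1:ℝ) 1, ∀ b ∈ Icc (-1:ℝ) 1, 0 ≤ R a b :=
    fun a ha b hb => (hR a ha b hb).1
  have hr₀ : 0 ≤ r := hr ▸ sInf_pairwise_nonneg hR₀
  have hRwv : R w v ∈ Icc r 1 := ⟨hr ▸ sInf_pairwise_le hR₀ hw hv, (hR w hw v hv).2⟩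
  have hRvw : R v w ∈ Icc r 1 := ⟨hr ▸ sInf_pairwise_le hR₀ hv hw, (hR v hv w hw).2⟩
  refine ⟨abs_one_sub_mul_add_mul_le hα.le hα₂ hRwv hRvw _, ?_⟩
  exact mul_le_of_le_one_left (abs_nonneg _) (sub_le_self _ (by positivity))

/-- in the noise-free controlled leader-leader interaction the
difference of opinions satisfies an explicit identity and, for compromise
functions with values in `[0,1]` and `α ≤ 1/2`, the interaction is a
contraction of the opinion distance. -/
theorem leaders_interaction_contraction
    (R : ℝ → ℝ → ℝ) (α ν β ψ μ wd mF : ℝ)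
    (hα : 0 < α) (hν : 0 < ν)
    (hβ : β = 4*α^2/(ν + 4*α^2))
    (hψ : 0 ≤ ψ) (hμ : 0 ≤ μ) (hψμ : ψ + μ = 1)
    (hwd : wd ∈ Icc (-1:ℝ) 1) (hmF : mF ∈ Icc (-1:ℝ) 1)
    (r : ℝ) :
    ∀ w ∈ Icc (-1:ℝ) 1, ∀ v ∈ Icc (-1:ℝ) 1,
      ((w + α * R w v * (v - w)
          + (-(β/2) * (ψ*((w - wd) + (v - wd)) + μ*((w - mF) + (v - mF)))
             - (α*β/2) * (R w v - R v w) * (v - w)))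
        - (v + α * R v w * (w - v)
          + (-(β/2) * (ψ*((w - wd) + (v - wd)) + μ*((w - mF) + (v - mF)))
             - (α*β/2) * (R w v - R v w) * (v - w)))
        = (1 - α * (R w v + R v w)) * (w - v))
      ∧ ((∀ a ∈ Icc (-1:ℝ) 1, ∀ b ∈ Icc (-1:ℝ) 1, R a b ∈ Icc (0:ℝ) 1) →
          r = sInf {x : ℝ | ∃ a ∈ Icc (-1:ℝ) 1, ∃ b ∈ Icc (-1:ℝ) 1, x = R a b} →
          α ≤ 1/2 →
          |(w + α * R w v * (v - w)
              + (-(β/2) * (ψ*((w - wd) + (v - wd)) + μ*((w - mF) + (v - mF)))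
                 - (α*β/2) * (R w v - R v w) * (v - w)))
            - (v + α * R v w * (w - v)
              + (-(β/2) * (ψ*((w - wd) + (v - wd)) + μ*((w - mF) + (v - mF)))
                 - (α*β/2) * (R w v - R v w) * (v - w)))|
            ≤ (1 - 2*α*r) * |w - v|
          ∧ (1 - 2*α*r) * |w - v| ≤ |w - v|) :=
  leaders_interaction_contraction_general R α β ψ μ wd mF hα r
end

section
/- Fix w̃_k, w̃_h, w_d, m_F ∈ ℝ, a function R : ℝ×ℝ → ℝ, and constants α > 0, ν > 0, ψ, μ ≥ 0 with ψ+μ = 1. For u ∈ ℝ define the post-interaction opinions w̃_k(u) = w̃_k + αR(w̃_k,w̃_h)(w̃_h−w̃_k) + 2αu and w̃_h(u) = w̃_h + αR(w̃_h,w̃_k)(w̃_k−w̃_h) + 2αu, and the cost J(u) = α[ (ψ/2)((w̃_k(u)−w_d)² + (w̃_h(u)−w_d)²) + (μ/2)((w̃_k(u)−m_F)² + (w̃_h(u)−m_F)²) + ν u² ]. Then J has a unique global minimizer u*, it satisfies the implicit feedback relation 2αu* = −(2α²/ν) Σ_{p∈{k,h}} [ψ(w̃_p(u*)−w_d) + μ(w̃_p(u*)−m_F)],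 and it is given explicitly by 2αu* = −(β/2)[ψ(w̃_k+w̃_h−2w_d) + μ(w̃_k+w̃_h−2m_F)] − (αβ/2)(R(w̃_k,w̃_h)−R(w̃_h,w̃_k))(w̃_h−w̃_k), where β = 4α²/(ν+4α²). -/
/-- Post-interaction opinion of the first of two interacting leaders with
opinions `wk`, `wh`, compromise function `R`, strength `α` and control `u`. -/
noncomputable def postOpinion (wk wh α : ℝ) (R : ℝ → ℝ → ℝ) (u : ℝ) : ℝ :=
  wk + α * R wk wh * (wh - wk) + 2*α*u

/-- The binary cost functional of the instantaneous control problem. -/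
noncomputable def binaryCost (wk wh wd mF α ν ψ μ : ℝ) (R : ℝ → ℝ → ℝ) (u : ℝ) : ℝ :=
  α * ((ψ/2) * ((postOpinion wk wh α R u - wd)^2 + (postOpinion wh wk α R u - wd)^2)
     + (μ/2) * ((postOpinion wk wh α R u - mF)^2 + (postOpinion wh wk α R u - mF)^2)
     + ν * u^2)

/-! The cost is a quadratic polynomial in `u` whose leading coefficient is `α (ν + 4α²)` once
`ψ + μ = 1`, so completing the square exhibits its unique minimizer. The first-order condition
`ν u* = -α ∑ₚ (ψ (w̃ₚ(u*) - w_d) + μ (w̃ₚ(u*) - m_F))` is the implicit feedback relation, and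
solving it for `u*` gives the explicit one. -/

theorem unique_global_min_of_eq_add_mul_sq {f : ℝ → ℝ} {a c : ℝ} (ha : 0 < a)
    (hf : ∀ u, f u = f c + a * (u - c) ^ 2) :
    (∀ u, f c ≤ f u) ∧ ∀ u', (∀ u, f u' ≤ f u) → u' = c := by
  refine ⟨fun u => ?_, fun u' hu' => ?_⟩
  · rw [hf u]
    have := mul_nonneg ha.le (sq_nonneg (u - c))
    linarith
  · have hle : a * (u' - c) ^ 2 ≤ 0 := by linarith [hu' c, hf u']
    have hsq : (u' - c) ^ 2 = 0 :=
      le_antisymm (nonpos_of_mul_nonpos_right hle ha) (sq_nonneg _)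
    exact sub_eq_zero.mp (pow_eq_zero_iff two_ne_zero |>.mp hsq)

section FeedbackControl

variable (wk wh wd mF : ℝ) (R : ℝ → ℝ → ℝ) (α ν ψ μ : ℝ)

noncomputable def feedbackControl : ℝ :=
  let s := postOpinion wk wh α R 0 + postOpinion wh wk α R 0
  α * (ψ * (2 * wd - s) + μ * (2 * mF - s)) / (ν + 4 * α ^ 2)

theorem feedbackControl_spec (hD : ν + 4 * α ^ 2 ≠ 0) :
    let s := postOpinion wk wh α R 0 + postOpinion wh wk α R 0
    (ν + 4 * α ^ 2) * feedbackControl wk wh wd mF R α ν ψ μ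
      = α * (ψ * (2 * wd - s) + μ * (2 * mF - s)) :=
  mul_div_cancel₀ _ hD

variable {wk wh wd mF R α ν ψ μ}

theorem binaryCost_eq_add_mul_sq (hψμ : ψ + μ = 1) (hD : ν + 4 * α ^ 2 ≠ 0) (u : ℝ) :
    binaryCost wk wh wd mF α ν ψ μ R u
      = binaryCost wk wh wd mF α ν ψ μ R (feedbackControl wk wh wd mF R α ν ψ μ)
        + α * (ν + 4 * α ^ 2) * (u - feedbackControl wk wh wd mF R α ν ψ μ) ^ 2 := by
  have hspec := feedbackControl_spec wk wh wd mF R α ν ψ μ hD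
  obtain rfl : μ = 1 - ψ := by linarith
  simp only [binaryCost, postOpinion] at hspec ⊢
  linear_combination 2 * α * (u - feedbackControl wk wh wd mF R α ν ψ (1 - ψ)) * hspec

theorem feedbackControl_implicit (hψμ : ψ + μ = 1) (hν : ν ≠ 0) (hD : ν + 4 * α ^ 2 ≠ 0) :
    let u := feedbackControl wk wh wd mF R α ν ψ μ
    2 * α * u = -(2 * α ^ 2 / ν) * ((ψ * (postOpinion wk wh α R u - wd)
        + μ * (postOpinion wk wh α R u - mF))
      + (ψ * (postOpinion wh wk α R u - wd) + μ * (postOpinion wh wk α R u - mF))) := by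
  have hspec := feedbackControl_spec wk wh wd mF R α ν ψ μ hD
  obtain rfl : μ = 1 - ψ := by linarith
  simp only [postOpinion] at hspec ⊢
  field_simp
  linear_combination α * hspec

theorem feedbackControl_explicit (hψμ : ψ + μ = 1) (hD : ν + 4 * α ^ 2 ≠ 0) :
    2 * α * feedbackControl wk wh wd mF R α ν ψ μ
      = -((4 * α ^ 2 / (ν + 4 * α ^ 2)) / 2) * (ψ * (wk + wh - 2 * wd) + μ * (wk + wh - 2 * mF))
        - (α * (4 * α ^ 2 / (ν + 4 * α ^ 2)) / 2) * (R wk wh - R wh wk) * (wh - wk) := by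
  have hspec := feedbackControl_spec wk wh wd mF R α ν ψ μ hD
  obtain rfl : μ = 1 - ψ := by linarith
  have hgain : 4 * α ^ 2 / (ν + 4 * α ^ 2) * (ν + 4 * α ^ 2) = 4 * α ^ 2 := div_mul_cancel₀ _ hD
  simp only [postOpinion] at hspec
  apply mul_left_cancel₀ hD
  linear_combination 2 * α * hspec
    + (ψ * (wk + wh - 2 * wd) + (1 - ψ) * (wk + wh - 2 * mF)
      + α * (R wk wh - R wh wk) * (wh - wk)) / 2 * hgain

end FeedbackControl

theorem binary_cost_unique_minimizer_general
    (wk wh wd mF : ℝ) (R : ℝ → ℝ → ℝ) (α ν ψ μ : ℝ)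
    (hα : 0 < α) (hν : 0 < ν) (hψμ : ψ + μ = 1) :
    ∃ ustar : ℝ,
      (∀ u : ℝ, binaryCost wk wh wd mF α ν ψ μ R ustar ≤ binaryCost wk wh wd mF α ν ψ μ R u)
      ∧ (∀ u' : ℝ,
          (∀ u : ℝ, binaryCost wk wh wd mF α ν ψ μ R u' ≤ binaryCost wk wh wd mF α ν ψ μ R u)
          → u' = ustar)
      ∧ (2*α*ustar
          = -(2*α^2/ν) * ((ψ*(postOpinion wk wh α R ustar - wd)
                            + μ*(postOpinion wk wh α R ustar - mF))
                          + (ψ*(postOpinion wh wk α R ustar - wd)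
                            + μ*(postOpinion wh wk α R ustar - mF))))
      ∧ (2*α*ustar
          = -((4*α^2/(ν + 4*α^2))/2) * (ψ*(wk + wh - 2*wd) + μ*(wk + wh - 2*mF))
            - (α*(4*α^2/(ν + 4*α^2))/2) * (R wk wh - R wh wk) * (wh - wk)) := by
  have hD : 0 < ν + 4 * α ^ 2 := by positivity
  obtain ⟨hmin, huniq⟩ := unique_global_min_of_eq_add_mul_sq
    (f := binaryCost wk wh wd mF α ν ψ μ R) (mul_pos hα hD) (binaryCost_eq_add_mul_sq hψμ hD.ne')
  exact ⟨_, hmin, huniq, feedbackControl_implicit hψμ hν.ne' hD.ne',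
    feedbackControl_explicit hψμ hD.ne'⟩

/-- the binary cost has a unique global minimizer, which satisfies
the implicit feedback relation and is given by the explicit feedback formula. -/
theorem binary_cost_unique_minimizer
    (wk wh wd mF : ℝ) (R : ℝ → ℝ → ℝ) (α ν ψ μ : ℝ)
    (hα : 0 < α) (hν : 0 < ν) (hψ : 0 ≤ ψ) (hμ : 0 ≤ μ) (hψμ : ψ + μ = 1) :
    ∃ ustar : ℝ,
      (∀ u : ℝ, binaryCost wk wh wd mF α ν ψ μ R ustar ≤ binaryCost wk wh wd mF α ν ψ μ R u)
      ∧ (∀ u' : ℝ,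
          (∀ u : ℝ, binaryCost wk wh wd mF α ν ψ μ R u' ≤ binaryCost wk wh wd mF α ν ψ μ R u)
          → u' = ustar)
      ∧ (2*α*ustar
          = -(2*α^2/ν) * ((ψ*(postOpinion wk wh α R ustar - wd)
                            + μ*(postOpinion wk wh α R ustar - mF))
                          + (ψ*(postOpinion wh wk α R ustar - wd)
                            + μ*(postOpinion wh wk α R ustar - mF))))
      ∧ (2*α*ustar
          = -((4*α^2/(ν + 4*α^2))/2) * (ψ*(wk + wh - 2*wd) + μ*(wk + wh - 2*mF))
            - (α*(4*α^2/(ν + 4*α^2))/2) * (R wk wh - R wh wk) * (wh - wk)) :=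
  binary_cost_unique_minimizer_general wk wh wd mF R α ν ψ μ hα hν hψμ
end

section
/- Let f_L : I → [0,∞) be integrable with ∫_I f_L = ρ > 0 and m_L = (1/ρ)∫_I w̃ f_L(w̃) dw̃, and let η_L > 0. For the noise-free controlled binary leader interaction one has (η_L/(2ρ)) ∫_{I²} (w̃* + ṽ* − w̃ − ṽ) f_L(w̃) f_L(ṽ) dw̃ dṽ = η_L α(1−β)(1/ρ) ∫_{I²} (R(w̃,ṽ)−R(ṽ,w̃)) ṽ f_L(w̃) f_L(ṽ) dw̃ dṽ + ρη_L β[ψ(w_d − m_L) + μ(m_F − m_L)]. -/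
open Set MeasureTheory

/-! Adding the two post-interaction opinions, the control removes the fraction β of the
asymmetric compromise term, and since ψ + μ = 1 the increment is
α(1-β)(R(w,v) - R(v,w))(v - w) - β(w + v - 2(ψ w_d + μ m_F)).
Integrated against f_L ⊗ f_L, the swap (w,v) ↦ (v,w) flips the sign of R(w,v) - R(v,w), so the
factor v - w may be replaced by 2v; the symmetric part factorises into the mass ρ and the first
moment ρ m_L. -/

section ProductIntegrals

variable {α : Type*} [MeasurableSpace α] {μ : Measure α}

lemma integrable_prod_add_sub_mul {f g : α → ℝ} (hf : Integrable f μ)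
    (hgf : Integrable (fun x => g x * f x) μ) (c : ℝ) :
    Integrable (fun p : α × α => (g p.1 + g p.2 - c) * f p.1 * f p.2) (μ.prod μ) :=
  (((hgf.mul_prod hf).add (hf.mul_prod hgf)).sub ((hf.const_mul c).mul_prod hf)).congr <|
    ae_of_all _ fun p => by simp only [Pi.add_apply, Pi.sub_apply]; ring

variable [SFinite μ]

lemma integral_prod_add_sub_mul {f g : α → ℝ} (hf : Integrable f μ)
    (hgf : Integrable (fun x => g x * f x) μ) (c : ℝ) :
    ∫ p, (g p.1 + g p.2 - c) * f p.1 * f p.2 ∂μ.prod μ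
      = 2 * (∫ x, g x * f x ∂μ) * (∫ x, f x ∂μ) - c * (∫ x, f x ∂μ) ^ 2 := by
  calc _ = ∫ p, g p.1 * f p.1 * f p.2 + f p.1 * (g p.2 * f p.2)
          - c * f p.1 * f p.2 ∂μ.prod μ := by
        congr 1 with p; ring
    _ = _ := by
      rw [integral_sub, integral_add, integral_prod_mul (fun x => g x * f x) f,
        integral_prod_mul f (fun x => g x * f x), integral_prod_mul (fun x => c * f x) f,
        integral_const_mul]
      · ring
      exacts [hgf.mul_prod hf, hf.mul_prod hgf, (hgf.mul_prod hf).add (hf.mul_prod hgf),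
        (hf.const_mul c).mul_prod hf]

lemma MeasureTheory.Integrable.antisymm_mul_fst_of_snd (R : α → α → ℝ) {f g : α → ℝ}
    (h : Integrable (fun p : α × α => (R p.1 p.2 - R p.2 p.1) * g p.2 * f p.1 * f p.2)
      (μ.prod μ)) :
    Integrable (fun p : α × α => (R p.1 p.2 - R p.2 p.1) * g p.1 * f p.1 * f p.2) (μ.prod μ) :=
  h.swap.neg.congr <| ae_of_all _ fun p => by
    simp only [Function.comp, Pi.neg_apply, Prod.fst_swap, Prod.snd_swap]; ring

lemma integral_prod_antisymm_mul_sub (R : α → α → ℝ) {f g : α → ℝ}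
    (h : Integrable (fun p : α × α => (R p.1 p.2 - R p.2 p.1) * g p.2 * f p.1 * f p.2)
      (μ.prod μ)) :
    ∫ p, (R p.1 p.2 - R p.2 p.1) * (g p.2 - g p.1) * f p.1 * f p.2 ∂μ.prod μ
      = 2 * ∫ p, (R p.1 p.2 - R p.2 p.1) * g p.2 * f p.1 * f p.2 ∂μ.prod μ := by
  have hswap : ∫ p, (R p.1 p.2 - R p.2 p.1) * g p.1 * f p.1 * f p.2 ∂μ.prod μ
      = -∫ p, (R p.1 p.2 - R p.2 p.1) * g p.2 * f p.1 * f p.2 ∂μ.prod μ := by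
    rw [← integral_neg, ← integral_prod_swap]
    congr 1 with p
    simp only [Prod.fst_swap, Prod.snd_swap]
    ring
  calc _ = ∫ p, (R p.1 p.2 - R p.2 p.1) * g p.2 * f p.1 * f p.2
          - (R p.1 p.2 - R p.2 p.1) * g p.1 * f p.1 * f p.2 ∂μ.prod μ := by
        congr 1 with p; ring
    _ = _ := by rw [integral_sub h (h.antisymm_mul_fst_of_snd R), hswap]; ring

lemma integral_integral_antisymm_interaction (R : α → α → ℝ) {f g : α → ℝ}
    (hf : Integrable f μ) (hgf : Integrable (fun x => g x * f x) μ)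
    (hR : Integrable (fun p : α × α => (R p.1 p.2 - R p.2 p.1) * g p.2 * f p.1 * f p.2)
      (μ.prod μ)) (a b c : ℝ) :
    ∫ x, ∫ y, (a * (R x y - R y x) * (g y - g x) - b * (g x + g y - c)) * f x * f y ∂μ ∂μ
      = 2 * a * (∫ x, ∫ y, (R x y - R y x) * g y * f x * f y ∂μ ∂μ)
        - b * (2 * (∫ x, g x * f x ∂μ) * (∫ x, f x ∂μ) - c * (∫ x, f x ∂μ) ^ 2) := by
  have hanti : Integrable (fun p : α × α =>
      (R p.1 p.2 - R p.2 p.1) * (g p.2 - g p.1) * f p.1 * f p.2) (μ.prod μ) :=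
    (hR.sub (hR.antisymm_mul_fst_of_snd R)).congr <|
      ae_of_all _ fun p => by simp only [Pi.sub_apply]; ring
  have hsymm := integrable_prod_add_sub_mul hf hgf c
  rw [integral_integral (((hanti.const_mul a).sub (hsymm.const_mul b)).congr
      (ae_of_all _ fun p => by simp only [Pi.sub_apply, Function.uncurry]; ring)),
    integral_integral hR]
  calc _ = ∫ p, a * ((R p.1 p.2 - R p.2 p.1) * (g p.2 - g p.1) * f p.1 * f p.2)
          - b * ((g p.1 + g p.2 - c) * f p.1 * f p.2) ∂μ.prod μ := by
        congr 1 with p; ring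
    _ = _ := by
      rw [integral_sub (hanti.const_mul a) (hsymm.const_mul b), integral_const_mul,
        integral_const_mul, integral_prod_antisymm_mul_sub R hR, integral_prod_add_sub_mul hf hgf]
      ring

lemma integrable_mul_prod_restrict {s : Set α} (hs : MeasurableSet s) {f : α → ℝ}
    (hf : IntegrableOn f s μ) {F : α × α → ℝ}
    (hF : AEStronglyMeasurable F ((μ.restrict s).prod (μ.restrict s))) {C : ℝ}
    (hFC : ∀ x ∈ s, ∀ y ∈ s, |F (x, y)| ≤ C) :
    Integrable (fun p : α × α => F p * f p.1 * f p.2) ((μ.restrict s).prod (μ.restrict s)) := by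
  have hmem : ∀ᵐ p ∂(μ.restrict s).prod (μ.restrict s), p ∈ s ×ˢ s := by
    rw [Measure.prod_restrict]
    exact ae_restrict_mem (hs.prod hs)
  refine ((hf.mul_prod hf).bdd_mul hF (c := C) ?_).congr (ae_of_all _ fun p => by ring)
  filter_upwards [hmem] with p hp
  exact hFC p.1 hp.1 p.2 hp.2

end ProductIntegrals

lemma abs_sub_mul_le_one_of_mem_Icc {a b x : ℝ} (ha : a ∈ Icc (0 : ℝ) 1) (hb : b ∈ Icc (0 : ℝ) 1)
    (hx : x ∈ Icc (-1 : ℝ) 1) : |(a - b) * x| ≤ 1 := by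
  rw [abs_mul]
  exact mul_le_one₀ (abs_sub_le_of_nonneg_of_le ha.1 ha.2 hb.1 hb.2) (abs_nonneg x) (abs_le.2 hx)

theorem leaders_mean_opinion_evolution_general
    (R : ℝ → ℝ → ℝ)
    (hRmeas : Measurable fun p : ℝ × ℝ => R p.1 p.2)
    (hR : ∀ w ∈ Icc (-1:ℝ) 1, ∀ v ∈ Icc (-1:ℝ) 1, R w v ∈ Icc (0:ℝ) 1)
    (α β ψ μ wd mF : ℝ)
    (hψμ : ψ + μ = 1)
    (fL : ℝ → ℝ)
    (hfLint : IntegrableOn fL (Icc (-1:ℝ) 1))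
    (ρ : ℝ) (hρ : 0 < ρ)
    (hmass : (∫ w in Icc (-1:ℝ) 1, fL w) = ρ)
    (mL : ℝ) (hmL : mL = (1/ρ) * ∫ w in Icc (-1:ℝ) 1, w * fL w)
    (ηL : ℝ) :
    (ηL/(2*ρ)) * (∫ w in Icc (-1:ℝ) 1, ∫ v in Icc (-1:ℝ) 1,
        ((w + α * R w v * (v - w)
            + (-(β/2) * (ψ*((w - wd) + (v - wd)) + μ*((w - mF) + (v - mF)))
               - (α*β/2) * (R w v - R v w) * (v - w)))
         + (v + α * R v w * (w - v)
            + (-(β/2) * (ψ*((w - wd) + (v - wd)) + μ*((w - mF) + (v - mF)))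
               - (α*β/2) * (R w v - R v w) * (v - w)))
         - w - v) * fL w * fL v)
    = ηL*α*(1 - β)*(1/ρ) * (∫ w in Icc (-1:ℝ) 1, ∫ v in Icc (-1:ℝ) 1,
        (R w v - R v w) * v * fL w * fL v)
      + ρ*ηL*β*(ψ*(wd - mL) + μ*(mF - mL)) := by
  have hincrement : ∀ w v : ℝ,
      (w + α * R w v * (v - w)
            + (-(β/2) * (ψ*((w - wd) + (v - wd)) + μ*((w - mF) + (v - mF)))
               - (α*β/2) * (R w v - R v w) * (v - w)))
         + (v + α * R v w * (w - v)
            + (-(β/2) * (ψ*((w - wd) + (v - wd)) + μ*((w - mF) + (v - mF)))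
               - (α*β/2) * (R w v - R v w) * (v - w)))
         - w - v
      = α * (1 - β) * (R w v - R v w) * (v - w) - β * (w + v - 2 * (ψ * wd + μ * mF)) :=
    fun w v => by linear_combination (-β * (w + v)) * hψμ
  have hRint : Integrable (fun p : ℝ × ℝ => (R p.1 p.2 - R p.2 p.1) * p.2 * fL p.1 * fL p.2)
      ((volume.restrict (Icc (-1:ℝ) 1)).prod (volume.restrict (Icc (-1:ℝ) 1))) :=
    integrable_mul_prod_restrict measurableSet_Icc hfLint
      ((hRmeas.sub (hRmeas.comp measurable_swap)).mul measurable_snd).aestronglyMeasurable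
      fun w hw v hv => abs_sub_mul_le_one_of_mem_Icc (hR w hw v hv) (hR v hv w hw) hv
  have hmoment : ∫ w in Icc (-1:ℝ) 1, w * fL w = ρ * mL := by
    rw [hmL]; field_simp
  simp_rw [hincrement]
  rw [integral_integral_antisymm_interaction R (g := fun x => x) hfLint
    (hfLint.continuousOn_mul continuousOn_id isCompact_Icc) hRint, hmoment, hmass,
    show μ = 1 - ψ by linarith]
  field_simp
  ring

/-- evolution of the leaders' mean opinion in the Boltzmann
description of the noise-free controlled leader-leader interaction. -/
theorem leaders_mean_opinion_evolution
    (R : ℝ → ℝ → ℝ)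
    (hRmeas : Measurable fun p : ℝ × ℝ => R p.1 p.2)
    (hR : ∀ w ∈ Icc (-1:ℝ) 1, ∀ v ∈ Icc (-1:ℝ) 1, R w v ∈ Icc (0:ℝ) 1)
    (α ν β ψ μ wd mF : ℝ)
    (hα : 0 < α) (hν : 0 < ν)
    (hβ : β = 4*α^2/(ν + 4*α^2))
    (hψ : 0 ≤ ψ) (hμ : 0 ≤ μ) (hψμ : ψ + μ = 1)
    (hwd : wd ∈ Icc (-1:ℝ) 1) (hmF : mF ∈ Icc (-1:ℝ) 1)
    (fL : ℝ → ℝ) (hfLmeas : Measurable fL)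
    (hfL0 : ∀ w ∈ Icc (-1:ℝ) 1, 0 ≤ fL w)
    (hfLint : IntegrableOn fL (Icc (-1:ℝ) 1))
    (ρ : ℝ) (hρ : 0 < ρ)
    (hmass : (∫ w in Icc (-1:ℝ) 1, fL w) = ρ)
    (mL : ℝ) (hmL : mL = (1/ρ) * ∫ w in Icc (-1:ℝ) 1, w * fL w)
    (ηL : ℝ) (hηL : 0 < ηL) :
    (ηL/(2*ρ)) * (∫ w in Icc (-1:ℝ) 1, ∫ v in Icc (-1:ℝ) 1,
        ((w + α * R w v * (v - w)
            + (-(β/2) * (ψ*((w - wd) + (v - wd)) + μ*((w - mF) + (v - mF)))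
               - (α*β/2) * (R w v - R v w) * (v - w)))
         + (v + α * R v w * (w - v)
            + (-(β/2) * (ψ*((w - wd) + (v - wd)) + μ*((w - mF) + (v - mF)))
               - (α*β/2) * (R w v - R v w) * (v - w)))
         - w - v) * fL w * fL v)
    = ηL*α*(1 - β)*(1/ρ) * (∫ w in Icc (-1:ℝ) 1, ∫ v in Icc (-1:ℝ) 1,
        (R w v - R v w) * v * fL w * fL v)
      + ρ*ηL*β*(ψ*(wd - mL) + μ*(mF - mL)) :=
  leaders_mean_opinion_evolution_general R hRmeas hR α β ψ μ wd mF hψμ fL hfLint ρ hρ hmass mL hmL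
    ηL
end

section
/- Let f_F : I → [0,∞) be integrable with ∫_I f_F = 1 and mean m_F = ∫_I w f_F(w) dw, let f_L : I → [0,∞) be integrable with ∫_I f_L = ρ > 0 and mean m_L = (1/ρ)∫_I w̃ f_L(w̃) dw̃, and let η_F, η_{FL} > 0, α > 0. Assume the follower compromise function P is symmetric, P(w,v) = P(v,w), and S ≡ 1. Then for the noise-free follower–follower interaction w* = w + αP(w,v)(v−w), v* = v + αP(v,w)(w−v) and the noise-free leader–follower interaction w** = w + α(ṽ−w), one has (η_F/2) ∫_{I²} (w* + v* − w − v) f_F(w) f_F(v) dw dv + η_{FL} ∫_{I²} (w** − w) f_F(w) f_L(ṽ) dw dṽ = ρ η_{FL} α (m_L − m_F); i.e. the followers' mean opinion evolves according to d m_F/dt = η̃_{FL} α (m_L − m_F) with η̃_{FL} = ρη_{FL}. -/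
/-!
With `P` symmetric, a follower–follower encounter moves `w` and `v` by opposite amounts, so
`w* + v* - w - v` vanishes pointwise and the first integral is zero. With `S ≡ 1` the
leader–follower change `w** - w = α (ṽ - w)` is a sum of products of a function of `w` and a
function of `ṽ`, so its integral against `f_F ⊗ f_L` is
`α (1 · ρ m_L - m_F · ρ) = α ρ (m_L - m_F)`.
-/

open Set MeasureTheory

theorem compromise_pair_sum_change_eq_zero {R : Type*} [CommRing R] {p q : R} (hpq : p = q)
    (α w v : R) : (w + α * p * (v - w)) + (v + α * q * (w - v)) - w - v = 0 := by
  subst hpq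
  ring

theorem integral_integral_compromise_change {μ ν : Measure ℝ} {f g : ℝ → ℝ}
    (hf : Integrable f μ) (hwf : Integrable (fun w => w * f w) μ)
    (hg : Integrable g ν) (hvg : Integrable (fun v => v * g v) ν) (α : ℝ) :
    ∫ w, ∫ v, ((w + α * (v - w)) - w) * f w * g v ∂ν ∂μ
      = α * ((∫ w, f w ∂μ) * (∫ v, v * g v ∂ν) - (∫ w, w * f w ∂μ) * ∫ v, g v ∂ν) := by
  have inner : ∀ w, ∫ v, ((w + α * (v - w)) - w) * f w * g v ∂ν
      = (α * (∫ v, v * g v ∂ν)) * f w - (α * ∫ v, g v ∂ν) * (w * f w) := fun w => by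
    have split : ∀ v, ((w + α * (v - w)) - w) * f w * g v
        = (α * f w) * (v * g v) - (α * (w * f w)) * g v := fun v => by ring
    simp only [split]
    rw [integral_sub (hvg.const_mul _) (hg.const_mul _), integral_const_mul, integral_const_mul]
    ring
  simp only [inner]
  rw [integral_sub (hf.const_mul _) (hwf.const_mul _), integral_const_mul, integral_const_mul]
  ring

theorem followers_mean_opinion_evolution_general
    (P : ℝ → ℝ → ℝ)
    (hPsym : ∀ w v : ℝ, P w v = P v w)
    (fF fL : ℝ → ℝ)
    (hfFint : IntegrableOn fF (Icc (-1:ℝ) 1))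
    (hfLint : IntegrableOn fL (Icc (-1:ℝ) 1))
    (hfFmass : (∫ w in Icc (-1:ℝ) 1, fF w) = 1)
    (ρ : ℝ) (hρ : 0 < ρ)
    (hfLmass : (∫ w in Icc (-1:ℝ) 1, fL w) = ρ)
    (mF mL : ℝ)
    (hmF : mF = ∫ w in Icc (-1:ℝ) 1, w * fF w)
    (hmL : mL = (1/ρ) * ∫ w in Icc (-1:ℝ) 1, w * fL w)
    (α ηF ηFL : ℝ) :
    (ηF/2) * (∫ w in Icc (-1:ℝ) 1, ∫ v in Icc (-1:ℝ) 1,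
        ((w + α * P w v * (v - w)) + (v + α * P v w * (w - v)) - w - v)
          * fF w * fF v)
    + ηFL * (∫ w in Icc (-1:ℝ) 1, ∫ v in Icc (-1:ℝ) 1,
        ((w + α * (v - w)) - w) * fF w * fL v)
    = ρ * ηFL * α * (mL - mF) := by
  have followers_conserve : ∀ w v : ℝ,
      ((w + α * P w v * (v - w)) + (v + α * P v w * (w - v)) - w - v) * fF w * fF v = 0 :=
    fun w v => by rw [compromise_pair_sum_change_eq_zero (hPsym w v), zero_mul, zero_mul]
  have leaders_first_moment : ∫ w in Icc (-1:ℝ) 1, w * fL w = ρ * mL := by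
    rw [hmL]
    field_simp
  rw [integral_integral_compromise_change hfFint
    (hfFint.continuousOn_mul continuousOn_id isCompact_Icc) hfLint
    (hfLint.continuousOn_mul continuousOn_id isCompact_Icc) α]
  simp only [followers_conserve, integral_zero, hfFmass, hfLmass, leaders_first_moment, ← hmF]
  ring

/-- for a symmetric follower compromise function `P` and `S ≡ 1`,
the followers' mean opinion evolves as `d m_F/dt = ρ η_FL α (m_L - m_F)`. -/
theorem followers_mean_opinion_evolution
    (P : ℝ → ℝ → ℝ)
    (hPsym : ∀ w v : ℝ, P w v = P v w)
    (hP : ∀ w ∈ Icc (-1:ℝ) 1, ∀ v ∈ Icc (-1:ℝ) 1, P w v ∈ Icc (0:ℝ) 1)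
    (fF fL : ℝ → ℝ) (hfFmeas : Measurable fF) (hfLmeas : Measurable fL)
    (hfF0 : ∀ w ∈ Icc (-1:ℝ) 1, 0 ≤ fF w)
    (hfL0 : ∀ w ∈ Icc (-1:ℝ) 1, 0 ≤ fL w)
    (hfFint : IntegrableOn fF (Icc (-1:ℝ) 1))
    (hfLint : IntegrableOn fL (Icc (-1:ℝ) 1))
    (hfFmass : (∫ w in Icc (-1:ℝ) 1, fF w) = 1)
    (ρ : ℝ) (hρ : 0 < ρ)
    (hfLmass : (∫ w in Icc (-1:ℝ) 1, fL w) = ρ)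
    (mF mL : ℝ)
    (hmF : mF = ∫ w in Icc (-1:ℝ) 1, w * fF w)
    (hmL : mL = (1/ρ) * ∫ w in Icc (-1:ℝ) 1, w * fL w)
    (α ηF ηFL : ℝ) (hα : 0 < α) (hηF : 0 < ηF) (hηFL : 0 < ηFL) :
    (ηF/2) * (∫ w in Icc (-1:ℝ) 1, ∫ v in Icc (-1:ℝ) 1,
        ((w + α * P w v * (v - w)) + (v + α * P v w * (w - v)) - w - v)
          * fF w * fF v)
    + ηFL * (∫ w in Icc (-1:ℝ) 1, ∫ v in Icc (-1:ℝ) 1,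
        ((w + α * (v - w)) - w) * fF w * fL v)
    = ρ * ηFL * α * (mL - mF) :=
  followers_mean_opinion_evolution_general P hPsym fF fL hfFint hfLint hfFmass ρ hρ hfLmass mF mL
    hmF hmL α ηF ηFL
end

section
/- Let a, b > 0, 0 < ψ ≤ 1, μ = 1−ψ and w_d ∈ ℝ. Then every differentiable pair (m_L, m_F) : [0,∞) → ℝ² solving d m_L/dt = bψ(w_d − m_L) + bμ(m_F − m_L), d m_F/dt = a(m_L − m_F) satisfies m_L(t) → w_d and m_F(t) → w_d as t → ∞; i.e. the mean opinions of leaders and followers both converge to the desired opinion w_d. -/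
/-!
With `u = m_L - w_d` and `v = m_F - w_d` the system is linear and homogeneous, and the weighted
energy `V = a u² + b v²` is a strict Lyapunov function:
`V' = -a b ((2 - ψ)(u - v)² + ψ (u² + v²))`, which for `0 < ψ ≤ 1` is at most `-κ V` with
`κ = a b ψ / (a + b)`. Hence `V` decays exponentially, and so do `u²` and `v²`.
-/

open Set Filter

theorem le_mul_exp_of_hasDerivWithinAt_le_neg_mul {V V' : ℝ → ℝ} {κ : ℝ}
    (hV : ∀ t ∈ Ici (0 : ℝ), HasDerivWithinAt V (V' t) (Ici 0) t)
    (hle : ∀ t ∈ Ici (0 : ℝ), V' t ≤ -κ * V t) :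
    ∀ t ∈ Ici (0 : ℝ), V t ≤ V 0 * Real.exp (-κ * t) := by
  have hW : ∀ t ∈ Ici (0 : ℝ), HasDerivWithinAt (fun s => Real.exp (κ * s) * V s)
      (Real.exp (κ * t) * (κ * V t + V' t)) (Ici 0) t := fun t ht =>
    ((((hasDerivAt_id t).const_mul κ).exp).hasDerivWithinAt.mul (hV t ht)).congr_deriv
      (by simp only [id, mul_one]; ring)
  have hanti : AntitoneOn (fun s => Real.exp (κ * s) * V s) (Ici 0) := by
    refine antitoneOn_of_hasDerivWithinAt_nonpos (convex_Ici 0)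
      (f' := fun t => Real.exp (κ * t) * (κ * V t + V' t))
      (fun t ht => (hW t ht).continuousWithinAt) (fun t ht => ?_) (fun t ht => ?_)
    · rw [interior_Ici] at ht ⊢
      exact (hW t (Ioi_subset_Ici_self ht)).mono Ioi_subset_Ici_self
    · rw [interior_Ici] at ht
      have := hle t (Ioi_subset_Ici_self ht)
      exact mul_nonpos_of_nonneg_of_nonpos (Real.exp_pos _).le (by linarith)
  intro t ht
  have hdecay := hanti self_mem_Ici ht ht
  simp only [mul_zero, Real.exp_zero, one_mul] at hdecay
  rwa [neg_mul, Real.exp_neg, ← div_eq_mul_inv, le_div_iff₀ (Real.exp_pos _), mul_comm]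

theorem tendsto_zero_of_hasDerivWithinAt_le_neg_mul {V V' : ℝ → ℝ} {κ : ℝ} (hκ : 0 < κ)
    (hV_nonneg : ∀ t ∈ Ici (0 : ℝ), 0 ≤ V t)
    (hV : ∀ t ∈ Ici (0 : ℝ), HasDerivWithinAt V (V' t) (Ici 0) t)
    (hle : ∀ t ∈ Ici (0 : ℝ), V' t ≤ -κ * V t) :
    Tendsto V atTop (nhds 0) := by
  have hexp : Tendsto (fun t => V 0 * Real.exp (-κ * t)) atTop (nhds 0) := by
    simpa using (Real.tendsto_exp_atBot.comp
      (tendsto_id.const_mul_atTop_of_neg (neg_neg_of_pos hκ))).const_mul (V 0)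
  exact squeeze_zero' (eventually_ge_atTop 0 |>.mono hV_nonneg)
    (eventually_ge_atTop 0 |>.mono (le_mul_exp_of_hasDerivWithinAt_le_neg_mul hV hle)) hexp

theorem tendsto_of_mul_sq_sub_le {α : Type*} {l : Filter α} {f V : α → ℝ} {c k : ℝ}
    (hk : 0 < k) (hV : Tendsto V l (nhds 0)) (hle : ∀ᶠ x in l, k * (f x - c) ^ 2 ≤ V x) :
    Tendsto f l (nhds c) := by
  have hsq : Tendsto (fun x => (f x - c) ^ 2) l (nhds 0) := by
    refine squeeze_zero' (Eventually.of_forall fun x => sq_nonneg _) (hle.mono fun x hx => ?_)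
      (by simpa using hV.div_const k)
    rw [le_div_iff₀ hk, mul_comm]; exact hx
  have habs : Tendsto (fun x => |f x - c|) l (nhds 0) := by
    simpa [Real.sqrt_sq_eq_abs] using hsq.sqrt
  simpa using (tendsto_zero_iff_abs_tendsto_zero _ |>.2 habs).add_const c

theorem energy_deriv_le {a b ψ : ℝ} (ha : 0 < a) (hb : 0 < b) (hψ0 : 0 < ψ) (hψ1 : ψ ≤ 1)
    (u v : ℝ) :
    2 * a * u * (-b * u + b * (1 - ψ) * v) + 2 * b * v * (a * (u - v)) ≤
      -(a * b * ψ / (a + b)) * (a * u ^ 2 + b * v ^ 2) := by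
  have hab : 0 < a * b := mul_pos ha hb
  have hweight : (a * u ^ 2 + b * v ^ 2) / (a + b) ≤ u ^ 2 + v ^ 2 := by
    rw [div_le_iff₀ (by positivity)]; nlinarith [sq_nonneg u, sq_nonneg v]
  calc 2 * a * u * (-b * u + b * (1 - ψ) * v) + 2 * b * v * (a * (u - v))
      = -(a * b) * ((2 - ψ) * (u - v) ^ 2 + ψ * (u ^ 2 + v ^ 2)) := by ring
    _ ≤ -(a * b * ψ) * (u ^ 2 + v ^ 2) := by nlinarith [mul_nonneg hab.le (sq_nonneg (u - v))]
    _ ≤ -(a * b * ψ) * ((a * u ^ 2 + b * v ^ 2) / (a + b)) :=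
      mul_le_mul_of_nonpos_left hweight (neg_nonpos.2 (by positivity))
    _ = -(a * b * ψ / (a + b)) * (a * u ^ 2 + b * v ^ 2) := by ring

/-- every solution of the closed system for the mean opinions
converges to the desired opinion `w_d` as `t → ∞`. -/
theorem mean_opinions_converge_to_desired
    (a b ψ μ wd : ℝ) (ha : 0 < a) (hb : 0 < b)
    (hψ0 : 0 < ψ) (hψ1 : ψ ≤ 1) (hμ : μ = 1 - ψ)
    (mL mF : ℝ → ℝ)
    (hmL : ∀ t ∈ Ici (0:ℝ),
        HasDerivWithinAt mL (b*ψ*(wd - mL t) + b*μ*(mF t - mL t)) (Ici 0) t)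
    (hmF : ∀ t ∈ Ici (0:ℝ),
        HasDerivWithinAt mF (a*(mL t - mF t)) (Ici 0) t) :
    Tendsto mL atTop (nhds wd) ∧ Tendsto mF atTop (nhds wd) := by
  subst hμ
  set V : ℝ → ℝ := fun t => a * (mL t - wd) ^ 2 + b * (mF t - wd) ^ 2
  have hV : ∀ t ∈ Ici (0 : ℝ), HasDerivWithinAt V
      (2 * a * (mL t - wd) * (-b * (mL t - wd) + b * (1 - ψ) * (mF t - wd)) +
        2 * b * (mF t - wd) * (a * ((mL t - wd) - (mF t - wd)))) (Ici 0) t := fun t ht =>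
    ((((hmL t ht).sub_const wd).pow 2).const_mul a |>.add
      ((((hmF t ht).sub_const wd).pow 2).const_mul b)).congr_deriv (by push_cast; ring)
  have hVlim : Tendsto V atTop (nhds 0) :=
    tendsto_zero_of_hasDerivWithinAt_le_neg_mul (by positivity) (fun t _ => by positivity) hV
      fun t _ => energy_deriv_le ha hb hψ0 hψ1 _ _
  exact ⟨tendsto_of_mul_sq_sub_le ha hVlim
      (Eventually.of_forall fun t => le_add_of_nonneg_right (by positivity)),
    tendsto_of_mul_sq_sub_le hb hVlim
      (Eventually.of_forall fun t => le_add_of_nonneg_left (by positivity))⟩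
end

section
/- Let f_F be a probability density on I with mean m_F and second moment E_F = ∫_I w² f_F(w) dw, and f_L a density on I with mass ρ > 0, mean m_L and second moment E_L = (1/ρ)∫_I w̃² f_L(w̃) dw̃. Take P ≡ S ≡ 1, interaction strength α > 0, rates η_F, η_{FL} > 0, diffusion weights D, D̂ : I → [0,1], and independent zero-mean noises θ₁, θ₂ of variance σ² and θ̂ of variance σ̂². Then (η_F/2)∫_{I²} E[(w*)²+(v*)²−w²−v²] f_F(w) f_F(v) dw dv + η_{FL}∫_{I²} E[(w**)²−w²] f_F(w) f_L(ṽ) dw dṽ = 2η_F α(α−1)(E_F − m_F²) + ρη_{FL} α²(E_L + E_F − 2 m_L m_F) + 2αρη_{FL}(m_F m_L − E_F) + η_F σ² ∫_I D²(w) f_F(w) dw + ρη_{FL} σ̂² ∫_I D̂²(w) f_F(w) dw. -/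
/-!
Averaging over the noise first, the centred noises only contribute their variances, so the
expected energy change of each binary interaction is a quadratic polynomial in the two opinions
plus the diffusion terms `σ² D²`. Such a kernel is a sum of products of a function of `w` and
a function of `v`, so its integral against `f_F(w) f_L(v)` factors into products of the moments
of the two densities.
-/

open Set MeasureTheory ProbabilityTheory

section Noise

variable {Ω : Type*} [MeasurableSpace Ω]

structure IsCenteredNoise (θ : Ω → ℝ) (μ : Measure Ω) (s : ℝ) : Prop where
  integrable : Integrable θ μ
  integrable_sq : Integrable (fun ω => θ ω ^ 2) μ
  integral_eq_zero : ∫ ω, θ ω ∂μ = 0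
  integral_sq : ∫ ω, θ ω ^ 2 ∂μ = s

namespace IsCenteredNoise

variable {θ : Ω → ℝ} {μ : Measure Ω} {s : ℝ}

theorem integrable_add_mul_sq [IsFiniteMeasure μ] (h : IsCenteredNoise θ μ s) (a b : ℝ) :
    Integrable (fun ω => (a + θ ω * b) ^ 2) μ := by
  simp_rw [add_sq, mul_pow]
  exact ((integrable_const _).fun_add ((h.integrable.mul_const b).const_mul (2 * a))).fun_add
    (h.integrable_sq.mul_const _)

theorem integral_add_mul_sq [IsProbabilityMeasure μ] (h : IsCenteredNoise θ μ s) (a b : ℝ) :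
    ∫ ω, (a + θ ω * b) ^ 2 ∂μ = a ^ 2 + s * b ^ 2 := by
  have h₁ := (h.integrable.mul_const b).const_mul (2 * a)
  have h₂ := h.integrable_sq.mul_const (b ^ 2)
  simp_rw [add_sq, mul_pow]
  rw [integral_add ((integrable_const _).fun_add h₁) h₂, integral_add (integrable_const _) h₁,
    integral_const_mul, integral_mul_const, integral_mul_const, h.integral_eq_zero,
    h.integral_sq]
  simp

end IsCenteredNoise

variable {μ : Measure Ω} [IsProbabilityMeasure μ] {θ θ₁ θ₂ : Ω → ℝ} {s : ℝ}

theorem integral_follower_interaction (h₁ : IsCenteredNoise θ₁ μ s) (h₂ : IsCenteredNoise θ₂ μ s)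
    (α w v d₁ d₂ : ℝ) :
    ∫ ω, ((w + α * (v - w) + θ₁ ω * d₁) ^ 2 + (v + α * (w - v) + θ₂ ω * d₂) ^ 2
        - w ^ 2 - v ^ 2) ∂μ
      = 2 * α * (α - 1) * (v - w) ^ 2 + s * (d₁ ^ 2 + d₂ ^ 2) := by
  have i₁ := h₁.integrable_add_mul_sq (w + α * (v - w)) d₁
  have i₂ := h₂.integrable_add_mul_sq (v + α * (w - v)) d₂
  rw [integral_sub (by fun_prop) (by fun_prop), integral_sub (by fun_prop) (by fun_prop),
    integral_add i₁ i₂, h₁.integral_add_mul_sq, h₂.integral_add_mul_sq]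
  simp only [integral_const, probReal_univ, smul_eq_mul, one_mul]
  ring

theorem integral_leader_interaction (h : IsCenteredNoise θ μ s) (α w v d : ℝ) :
    ∫ ω, ((w + α * (v - w) + θ ω * d) ^ 2 - w ^ 2) ∂μ
      = 2 * α * w * (v - w) + α ^ 2 * (v - w) ^ 2 + s * d ^ 2 := by
  rw [integral_sub (h.integrable_add_mul_sq _ _) (integrable_const _), h.integral_add_mul_sq]
  simp only [integral_const, probReal_univ, smul_eq_mul, one_mul]
  ring

end Noise

theorem integral_integral_finsetSum_mul {α β ι 𝕜 : Type*} [RCLike 𝕜] [MeasurableSpace α]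
    [MeasurableSpace β] {μ : Measure α} {ν : Measure β} (s : Finset ι) {φ : ι → α → 𝕜}
    {ψ : ι → β → 𝕜} (hφ : ∀ i ∈ s, Integrable (φ i) μ) (hψ : ∀ i ∈ s, Integrable (ψ i) ν) :
    ∫ x, ∫ y, ∑ i ∈ s, φ i x * ψ i y ∂ν ∂μ = ∑ i ∈ s, (∫ x, φ i x ∂μ) * ∫ y, ψ i y ∂ν := by
  calc ∫ x, ∫ y, ∑ i ∈ s, φ i x * ψ i y ∂ν ∂μ = ∫ x, ∑ i ∈ s, φ i x * ∫ y, ψ i y ∂ν ∂μ := by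
        congr 1 with x
        rw [integral_finsetSum s fun i hi => (hψ i hi).const_mul _]
        simp only [integral_const_mul]
    _ = _ := by
        rw [integral_finsetSum s fun i hi => (hφ i hi).mul_const _]
        simp only [integral_mul_const]

theorem integral_integral_quadratic_kernel_mul {μ ν : Measure ℝ} {f g H₁ H₂ : ℝ → ℝ}
    {K : ℝ → ℝ → ℝ} {a b c : ℝ}
    (hK : ∀ w v, K w v = a * w ^ 2 + b * (w * v) + c * v ^ 2 + H₁ w + H₂ v)
    (hf : Integrable f μ) (hf₁ : Integrable (fun w => w * f w) μ)
    (hf₂ : Integrable (fun w => w ^ 2 * f w) μ) (hfH : Integrable (fun w => H₁ w * f w) μ)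
    (hg : Integrable g ν) (hg₁ : Integrable (fun v => v * g v) ν)
    (hg₂ : Integrable (fun v => v ^ 2 * g v) ν) (hgH : Integrable (fun v => H₂ v * g v) ν) :
    ∫ w, ∫ v, K w v * f w * g v ∂ν ∂μ =
      a * (∫ w, w ^ 2 * f w ∂μ) * (∫ v, g v ∂ν) + b * (∫ w, w * f w ∂μ) * (∫ v, v * g v ∂ν)
        + c * (∫ w, f w ∂μ) * (∫ v, v ^ 2 * g v ∂ν) + (∫ w, H₁ w * f w ∂μ) * (∫ v, g v ∂ν)
        + (∫ w, f w ∂μ) * ∫ v, H₂ v * g v ∂ν := by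
  let φ : Fin 5 → ℝ → ℝ :=
    ![fun w => a * (w ^ 2 * f w), fun w => b * (w * f w), fun w => c * f w,
      fun w => H₁ w * f w, f]
  let ψ : Fin 5 → ℝ → ℝ :=
    ![g, fun v => v * g v, fun v => v ^ 2 * g v, g, fun v => H₂ v * g v]
  have hsplit : ∀ w v, K w v * f w * g v = ∑ i, φ i w * ψ i v := fun w v => by
    simp only [hK, Matrix.cons_val', Matrix.cons_val_fin_one, Fin.sum_univ_five, Fin.isValue,
      Matrix.cons_val_zero, Matrix.cons_val_one, Matrix.cons_val, φ, ψ]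
    ring
  simp_rw [hsplit]
  rw [integral_integral_finsetSum_mul Finset.univ]
  · simp [φ, ψ, Fin.sum_univ_five, integral_const_mul]
  · simp [φ, Fin.forall_fin_succ, hf, hf₁.const_mul, hf₂.const_mul, hfH, hf.const_mul]
  · simp [ψ, Fin.forall_fin_succ, hg, hg₁, hg₂, hgH]

theorem MeasureTheory.IntegrableOn.sq_mul_of_mapsTo_Icc {α : Type*} [MeasurableSpace α]
    {μ : Measure α} {s : Set α} {f D : α → ℝ} (hs : MeasurableSet s) (hf : IntegrableOn f s μ)
    (hD : Measurable D) (hD01 : MapsTo D s (Icc 0 1)) :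
    IntegrableOn (fun x => D x ^ 2 * f x) s μ :=
  hf.bdd_mul (c := 1) (hD.pow_const 2).aestronglyMeasurable <|
    ae_restrict_of_forall_mem hs fun x hx => by
      obtain ⟨h0, h1⟩ := hD01 hx
      rw [Real.norm_eq_abs, abs_of_nonneg (by positivity)]
      exact pow_le_one₀ h0 h1

theorem followers_second_moment_evolution_general
    (fF fL : ℝ → ℝ)
    (hfFint : IntegrableOn fF (Icc (-1:ℝ) 1))
    (hfLint : IntegrableOn fL (Icc (-1:ℝ) 1))
    (hfFmass : (∫ w in Icc (-1:ℝ) 1, fF w) = 1)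
    (ρ : ℝ) (hρ : 0 < ρ)
    (hfLmass : (∫ w in Icc (-1:ℝ) 1, fL w) = ρ)
    (mF mL EF EL : ℝ)
    (hmF : mF = ∫ w in Icc (-1:ℝ) 1, w * fF w)
    (hEF : EF = ∫ w in Icc (-1:ℝ) 1, w^2 * fF w)
    (hmL : mL = (1/ρ) * ∫ w in Icc (-1:ℝ) 1, w * fL w)
    (hEL : EL = (1/ρ) * ∫ w in Icc (-1:ℝ) 1, w^2 * fL w)
    (α ηF ηFL σ σh : ℝ)
    (D Dh : ℝ → ℝ) (hDmeas : Measurable D) (hDhmeas : Measurable Dh)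
    (hD : ∀ w ∈ Icc (-1:ℝ) 1, D w ∈ Icc (0:ℝ) 1)
    (hDh : ∀ w ∈ Icc (-1:ℝ) 1, Dh w ∈ Icc (0:ℝ) 1)
    (Ω : Type*) [MeasureSpace Ω] [IsProbabilityMeasure (volume : Measure Ω)]
    (θ₁ θ₂ θh : Ω → ℝ)
    (hθ₁int : Integrable θ₁) (hθ₂int : Integrable θ₂) (hθhint : Integrable θh)
    (hθ₁sq : Integrable fun ω => (θ₁ ω)^2)
    (hθ₂sq : Integrable fun ω => (θ₂ ω)^2)
    (hθhsq : Integrable fun ω => (θh ω)^2)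
    (hθ₁mean : (∫ ω, θ₁ ω) = 0) (hθ₂mean : (∫ ω, θ₂ ω) = 0)
    (hθhmean : (∫ ω, θh ω) = 0)
    (hθ₁var : (∫ ω, (θ₁ ω)^2) = σ^2) (hθ₂var : (∫ ω, (θ₂ ω)^2) = σ^2)
    (hθhvar : (∫ ω, (θh ω)^2) = σh^2) :
    (ηF/2) * (∫ w in Icc (-1:ℝ) 1, ∫ v in Icc (-1:ℝ) 1,
        (∫ ω, ((w + α*(v - w) + θ₁ ω * D w)^2
               + (v + α*(w - v) + θ₂ ω * D v)^2 - w^2 - v^2))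
          * fF w * fF v)
    + ηFL * (∫ w in Icc (-1:ℝ) 1, ∫ v in Icc (-1:ℝ) 1,
        (∫ ω, ((w + α*(v - w) + θh ω * Dh w)^2 - w^2)) * fF w * fL v)
    = 2*ηF*α*(α - 1)*(EF - mF^2)
      + ρ*ηFL*α^2*(EL + EF - 2*mL*mF)
      + 2*α*ρ*ηFL*(mF*mL - EF)
      + ηF*σ^2*(∫ w in Icc (-1:ℝ) 1, (D w)^2 * fF w)
      + ρ*ηFL*σh^2*(∫ w in Icc (-1:ℝ) 1, (Dh w)^2 * fF w) := by
  have ν₁ : IsCenteredNoise θ₁ volume (σ ^ 2) := ⟨hθ₁int, hθ₁sq, hθ₁mean, hθ₁var⟩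
  have ν₂ : IsCenteredNoise θ₂ volume (σ ^ 2) := ⟨hθ₂int, hθ₂sq, hθ₂mean, hθ₂var⟩
  have νh : IsCenteredNoise θh volume (σh ^ 2) := ⟨hθhint, hθhsq, hθhmean, hθhvar⟩
  have kF : ∀ w v, ∫ ω, ((w + α*(v - w) + θ₁ ω * D w)^2 + (v + α*(w - v) + θ₂ ω * D v)^2
      - w^2 - v^2) = 2*α*(α - 1) * w^2 + -(4*α*(α - 1)) * (w*v) + 2*α*(α - 1) * v^2
        + σ^2 * D w^2 + σ^2 * D v^2 := fun w v => by
    rw [integral_follower_interaction ν₁ ν₂]; ring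
  -- the `+ 0` is the diffusion term in the leader's opinion, which the interaction leaves unchanged
  have kL : ∀ w v, ∫ ω, ((w + α*(v - w) + θh ω * Dh w)^2 - w^2)
      = (α^2 - 2*α) * w^2 + (2*α - 2*α^2) * (w*v) + α^2 * v^2 + σh^2 * Dh w^2 + 0 :=
    fun w v => by rw [integral_leader_interaction νh]; ring
  have hI : IsCompact (Icc (-1:ℝ) 1) := isCompact_Icc
  have hF₁ := hfFint.continuousOn_mul (continuousOn_id' _) hI
  have hF₂ := hfFint.continuousOn_mul (continuousOn_pow 2) hI
  have hL₁ := hfLint.continuousOn_mul (continuousOn_id' _) hI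
  have hL₂ := hfLint.continuousOn_mul (continuousOn_pow 2) hI
  have hDF := (hfFint.sq_mul_of_mapsTo_Icc measurableSet_Icc hDmeas hD).const_mul (σ^2)
  have hDhF := (hfFint.sq_mul_of_mapsTo_Icc measurableSet_Icc hDhmeas hDh).const_mul (σh^2)
  simp only [← mul_assoc] at hDF hDhF
  rw [integral_integral_quadratic_kernel_mul kF hfFint hF₁ hF₂ hDF hfFint hF₁ hF₂ hDF,
    integral_integral_quadratic_kernel_mul kL hfFint hF₁ hF₂ hDhF hfLint hL₁ hL₂ (by simp)]
  have hmL' : ∫ w in Icc (-1:ℝ) 1, w * fL w = ρ * mL := by rw [hmL]; field_simp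
  have hEL' : ∫ w in Icc (-1:ℝ) 1, w ^ 2 * fL w = ρ * EL := by rw [hEL]; field_simp
  simp only [mul_assoc, integral_const_mul]
  rw [hfFmass, hfLmass, ← hmF, ← hEF, hmL', hEL']
  ring

/-- evolution of the followers' second moment in the Boltzmann
description with `P ≡ S ≡ 1` and diffusion. -/
theorem followers_second_moment_evolution
    (fF fL : ℝ → ℝ) (hfFmeas : Measurable fF) (hfLmeas : Measurable fL)
    (hfF0 : ∀ w ∈ Icc (-1:ℝ) 1, 0 ≤ fF w)
    (hfL0 : ∀ w ∈ Icc (-1:ℝ) 1, 0 ≤ fL w)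
    (hfFint : IntegrableOn fF (Icc (-1:ℝ) 1))
    (hfLint : IntegrableOn fL (Icc (-1:ℝ) 1))
    (hfFmass : (∫ w in Icc (-1:ℝ) 1, fF w) = 1)
    (ρ : ℝ) (hρ : 0 < ρ)
    (hfLmass : (∫ w in Icc (-1:ℝ) 1, fL w) = ρ)
    (mF mL EF EL : ℝ)
    (hmF : mF = ∫ w in Icc (-1:ℝ) 1, w * fF w)
    (hEF : EF = ∫ w in Icc (-1:ℝ) 1, w^2 * fF w)
    (hmL : mL = (1/ρ) * ∫ w in Icc (-1:ℝ) 1, w * fL w)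
    (hEL : EL = (1/ρ) * ∫ w in Icc (-1:ℝ) 1, w^2 * fL w)
    (α ηF ηFL σ σh : ℝ) (hα : 0 < α) (hηF : 0 < ηF) (hηFL : 0 < ηFL)
    (D Dh : ℝ → ℝ) (hDmeas : Measurable D) (hDhmeas : Measurable Dh)
    (hD : ∀ w ∈ Icc (-1:ℝ) 1, D w ∈ Icc (0:ℝ) 1)
    (hDh : ∀ w ∈ Icc (-1:ℝ) 1, Dh w ∈ Icc (0:ℝ) 1)
    (Ω : Type*) [MeasureSpace Ω] [IsProbabilityMeasure (volume : Measure Ω)]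
    (θ₁ θ₂ θh : Ω → ℝ)
    (hθ₁meas : Measurable θ₁) (hθ₂meas : Measurable θ₂) (hθhmeas : Measurable θh)
    (hindep₁₂ : IndepFun θ₁ θ₂) (hindep₁h : IndepFun θ₁ θh) (hindep₂h : IndepFun θ₂ θh)
    (hθ₁int : Integrable θ₁) (hθ₂int : Integrable θ₂) (hθhint : Integrable θh)
    (hθ₁sq : Integrable fun ω => (θ₁ ω)^2)
    (hθ₂sq : Integrable fun ω => (θ₂ ω)^2)
    (hθhsq : Integrable fun ω => (θh ω)^2)
    (hθ₁mean : (∫ ω, θ₁ ω) = 0) (hθ₂mean : (∫ ω, θ₂ ω) = 0)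
    (hθhmean : (∫ ω, θh ω) = 0)
    (hθ₁var : (∫ ω, (θ₁ ω)^2) = σ^2) (hθ₂var : (∫ ω, (θ₂ ω)^2) = σ^2)
    (hθhvar : (∫ ω, (θh ω)^2) = σh^2) :
    (ηF/2) * (∫ w in Icc (-1:ℝ) 1, ∫ v in Icc (-1:ℝ) 1,
        (∫ ω, ((w + α*(v - w) + θ₁ ω * D w)^2
               + (v + α*(w - v) + θ₂ ω * D v)^2 - w^2 - v^2))
          * fF w * fF v)
    + ηFL * (∫ w in Icc (-1:ℝ) 1, ∫ v in Icc (-1:ℝ) 1,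
        (∫ ω, ((w + α*(v - w) + θh ω * Dh w)^2 - w^2)) * fF w * fL v)
    = 2*ηF*α*(α - 1)*(EF - mF^2)
      + ρ*ηFL*α^2*(EL + EF - 2*mL*mF)
      + 2*α*ρ*ηFL*(mF*mL - EF)
      + ηF*σ^2*(∫ w in Icc (-1:ℝ) 1, (D w)^2 * fF w)
      + ρ*ηFL*σh^2*(∫ w in Icc (-1:ℝ) 1, (Dh w)^2 * fF w) :=
  followers_second_moment_evolution_general fF fL hfFint hfLint hfFmass ρ hρ hfLmass mF mL EF EL hmF
    hEF hmL hEL α ηF ηFL σ σh D Dh hDmeas hDhmeas hD hDh Ω θ₁ θ₂ θh hθ₁int hθ₂int hθhint hθ₁sq hθ₂sq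
    hθhsq hθ₁mean hθ₂mean hθhmean hθ₁var hθ₂var hθhvar
end

section
/- Let η_F, η̃_{FL}, η̃_L > 0, 0 < α < 1, 0 < β < 2, 0 < ψ ≤ 1, μ = 1−ψ and w_d ∈ ℝ. Let (m_L, m_F) solve d m_L/dt = η̃_L β[ψ(w_d − m_L) + μ(m_F − m_L)], d m_F/dt = η̃_{FL} α (m_L − m_F), and let (E_F, E_L) solve the diffusion-free second moment equations d E_F/dt = 2η_F α(α−1)(E_F − m_F²) + η̃_{FL} α²(E_L + E_F − 2 m_L m_F) + 2α η̃_{FL}(m_F m_L − E_F), d E_L/dt = η̃_L [ 2α(α−1)(E_L − m_L²) − (β/2)(2−β)(E_L + m_L²) + 2β(1−β)(ψ w_d + μ m_F) m_L + β²(ψ w_d + μ m_F)² ]. Then E_F(t) → w_d² and E_L(t) → w_d² as t → ∞; consequently E_F(t) + w_d² − 2 m_F(t) w_d → 0 and E_L(t) + w_d² − 2 m_L(t) w_d → 0, i.e. the second moments of the deviation from the desired opinion vanish in the large-time limit. -/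
/-!
Write `a = η̃_L β` and `b = η̃_{FL} α`. The deviations `m_L - w_d`, `m_F - w_d` of the means
solve a linear system for which `b (m_L - w_d)² + a (m_F - w_d)²` is a strict Lyapunov function,
so both means tend to `w_d`. Each second-moment equation then reads `E' = g(t) - c E` with
`c > 0` and a forcing `g(t) → c w_d²` (for `E_F` the forcing involves `E_L`, so the leaders come
first), and comparison with `exp (-c t)` shows that such an `E` tends to `w_d²`.
-/

open Set Filter Topology Real

section LinearComparison

variable {y d : ℝ → ℝ} {c R t₀ : ℝ}

/-- Comparison with the solution of `z' = c (R - z)`: `exp (c t) (y t - R)` is antitone. -/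
theorem le_add_mul_exp_of_hasDerivWithinAt_le
    (hy : ∀ t ∈ Ici t₀, HasDerivWithinAt y (d t) (Ici t₀) t)
    (hd : ∀ t ∈ Ici t₀, d t ≤ c * (R - y t)) {t : ℝ} (ht : t₀ ≤ t) :
    y t ≤ R + (y t₀ - R) * exp (-(c * (t - t₀))) := by
  have hderiv : ∀ s ∈ Ici t₀, HasDerivWithinAt (fun s => exp (c * s) * (y s - R))
      (exp (c * s) * c * (y s - R) + exp (c * s) * d s) (Ici t₀) s := fun s hs =>
    (((hasDerivAt_id s).const_mul c).exp.hasDerivWithinAt.congr_deriv (by simp [mul_comm])).mul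
      ((hy s hs).sub_const R)
  have hanti : AntitoneOn (fun s => exp (c * s) * (y s - R)) (Ici t₀) := by
    refine antitoneOn_of_hasDerivWithinAt_nonpos (convex_Ici t₀)
      (f' := fun s => exp (c * s) * c * (y s - R) + exp (c * s) * d s)
      (fun s hs => (hderiv s hs).continuousWithinAt) (fun s hs => ?_) (fun s hs => ?_)
    · rw [interior_Ici] at hs ⊢
      exact (hderiv s (mem_Ici_of_Ioi hs)).mono Ioi_subset_Ici_self
    · rw [interior_Ici] at hs
      have := hd s (mem_Ici_of_Ioi hs)
      nlinarith [exp_pos (c * s)]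
  have hmono : exp (c * t) * (y t - R) ≤ exp (c * t₀) * (y t₀ - R) := hanti self_mem_Ici ht ht
  have hsplit : exp (c * t₀) = exp (c * t) * exp (-(c * (t - t₀))) := by
    rw [← exp_add]; ring_nf
  rw [hsplit] at hmono
  nlinarith [exp_pos (c * t)]

theorem tendsto_add_mul_exp_neg_mul_sub (hc : 0 < c) (A : ℝ) :
    Tendsto (fun t => R + A * exp (-(c * (t - t₀)))) atTop (𝓝 R) := by
  have hexp : Tendsto (fun t => exp (-(c * (t - t₀)))) atTop (𝓝 0) :=
    tendsto_exp_atBot.comp <| tendsto_neg_atTop_atBot.comp <|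
      (tendsto_atTop_add_const_right _ _ tendsto_id).const_mul_atTop hc
  simpa using (hexp.const_mul A).const_add R

theorem eventually_lt_of_hasDerivWithinAt_le (hc : 0 < c)
    (hy : ∀ t ∈ Ici t₀, HasDerivWithinAt y (d t) (Ici t₀) t)
    (hd : ∀ᶠ t in atTop, d t ≤ c * (R - y t)) {R' : ℝ} (hR : R < R') :
    ∀ᶠ t in atTop, y t < R' := by
  obtain ⟨T₁, hT₁⟩ := eventually_atTop.1 hd
  set T := max T₁ t₀
  have hyT : ∀ t ∈ Ici T, HasDerivWithinAt y (d t) (Ici T) t := fun t ht =>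
    (hy t ((le_max_right T₁ t₀).trans ht)).mono (Ici_subset_Ici.2 (le_max_right _ _))
  have hdT : ∀ t ∈ Ici T, d t ≤ c * (R - y t) := fun t ht =>
    hT₁ t ((le_max_left T₁ t₀).trans ht)
  filter_upwards [(tendsto_add_mul_exp_neg_mul_sub hc (y T - R)).eventually_lt_const hR,
    eventually_ge_atTop T] with t hlt ht
  exact (le_add_mul_exp_of_hasDerivWithinAt_le hyT hdT ht).trans_lt hlt

end LinearComparison

theorem tendsto_zero_of_hasDerivWithinAt_le_neg_mul_s13 {W d : ℝ → ℝ} {κ t₀ : ℝ} (hκ : 0 < κ)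
    (hW : ∀ t ∈ Ici t₀, HasDerivWithinAt W (d t) (Ici t₀) t)
    (hd : ∀ t ∈ Ici t₀, d t ≤ -κ * W t) (hW0 : ∀ t, 0 ≤ W t) :
    Tendsto W atTop (𝓝 0) := by
  refine tendsto_order.2 ⟨fun a ha => Eventually.of_forall fun t => ha.trans_le (hW0 t),
    fun a ha => eventually_lt_of_hasDerivWithinAt_le hκ hW ?_ ha⟩
  filter_upwards [eventually_ge_atTop t₀] with t ht
  linarith [hd t ht]

theorem tendsto_of_hasDerivWithinAt_sub_mul {x g : ℝ → ℝ} {c L t₀ : ℝ} (hc : 0 < c)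
    (hx : ∀ t ∈ Ici t₀, HasDerivWithinAt x (g t - c * x t) (Ici t₀) t)
    (hg : Tendsto g atTop (𝓝 (c * L))) :
    Tendsto x atTop (𝓝 L) := by
  refine tendsto_order.2 ⟨fun L' hL' => ?_, fun L' hL' => ?_⟩
  · obtain ⟨R, hL'R, hRL⟩ := exists_between hL'
    have hgR : ∀ᶠ t in atTop, c * R < g t :=
      hg.eventually_const_lt (mul_lt_mul_of_pos_left hRL hc)
    have hneg := eventually_lt_of_hasDerivWithinAt_le (y := fun t => -x t) (R := -R) hc
      (fun t ht => (hx t ht).neg) (hgR.mono fun t ht => by linarith) (neg_lt_neg hL'R)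
    exact hneg.mono fun t ht => neg_lt_neg_iff.1 ht
  · obtain ⟨R, hLR, hRL'⟩ := exists_between hL'
    have hgR : ∀ᶠ t in atTop, g t < c * R :=
      hg.eventually_lt_const (mul_lt_mul_of_pos_left hLR hc)
    exact eventually_lt_of_hasDerivWithinAt_le hc hx (hgR.mono fun t ht => by linarith) hRL'

/-- The left side is the derivative of `b u² + a v²` along `u' = a (-ψ u + (1 - ψ) (v - u))`,
`v' = b (u - v)`. -/
theorem lyapunov_deriv_le {a b ψ : ℝ} (ha : 0 < a) (hb : 0 < b) (hψ0 : 0 ≤ ψ) (hψ2 : ψ ≤ 2)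
    (u v : ℝ) :
    2 * b * u * (a * (ψ * -u + (1 - ψ) * (v - u))) + 2 * a * v * (b * (u - v))
      ≤ -(ψ * min a b) * (b * u ^ 2 + a * v ^ 2) := by
  have hdecomp : 2 * b * u * (a * (ψ * -u + (1 - ψ) * (v - u))) + 2 * a * v * (b * (u - v))
      = -(a * b * (2 - ψ) * (u - v) ^ 2) - ψ * (a * b * u ^ 2 + b * a * v ^ 2) := by ring
  have h1 : 0 ≤ a * b * (2 - ψ) * (u - v) ^ 2 := by
    have : 0 ≤ 2 - ψ := by linarith
    positivity
  have h2 : 0 ≤ ψ * b * (a - min a b) * u ^ 2 := by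
    have : 0 ≤ a - min a b := sub_nonneg.2 (min_le_left a b)
    positivity
  have h3 : 0 ≤ ψ * a * (b - min a b) * v ^ 2 := by
    have : 0 ≤ b - min a b := sub_nonneg.2 (min_le_right a b)
    positivity
  rw [hdecomp]
  linear_combination h1 + h2 + h3

theorem tendsto_mean_opinions {a b ψ μ w t₀ : ℝ} {mL mF : ℝ → ℝ} (ha : 0 < a) (hb : 0 < b)
    (hψ0 : 0 < ψ) (hψ2 : ψ ≤ 2) (hμ : μ = 1 - ψ)
    (hmL : ∀ t ∈ Ici t₀,
        HasDerivWithinAt mL (a * (ψ * (w - mL t) + μ * (mF t - mL t))) (Ici t₀) t)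
    (hmF : ∀ t ∈ Ici t₀, HasDerivWithinAt mF (b * (mL t - mF t)) (Ici t₀) t) :
    Tendsto mL atTop (𝓝 w) ∧ Tendsto mF atTop (𝓝 w) := by
  subst hμ
  set W : ℝ → ℝ := fun t => b * (mL t - w) ^ 2 + a * (mF t - w) ^ 2
  have hW0 : ∀ t, 0 ≤ W t := fun t => by positivity
  have hW : Tendsto W atTop (𝓝 0) := by
    refine tendsto_zero_of_hasDerivWithinAt_le_neg_mul_s13 (by positivity : 0 < ψ * min a b)
      (fun t ht => ((((hmL t ht).sub_const w).pow 2).const_mul b).add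
        ((((hmF t ht).sub_const w).pow 2).const_mul a)) (fun t _ => ?_) hW0
    convert lyapunov_deriv_le ha hb hψ0.le hψ2 (mL t - w) (mF t - w) using 1
    push_cast
    ring
  have tendsto_of_sq_le : ∀ {c : ℝ} {f : ℝ → ℝ}, 0 < c → (∀ t, c * (f t - w) ^ 2 ≤ W t) →
      Tendsto f atTop (𝓝 w) := fun {c f} hc hle => by
    refine tendsto_sub_nhds_zero_iff.1 (squeeze_zero_norm (fun t => ?_)
      (by simpa using (hW.div_const c).sqrt))
    exact abs_le_sqrt ((le_div_iff₀' hc).2 (hle t))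
  exact ⟨tendsto_of_sq_le hb fun t => le_add_of_nonneg_right (by positivity),
    tendsto_of_sq_le ha fun t => le_add_of_nonneg_left (by positivity)⟩

theorem tendsto_leader_second_moment {η α β ψ μ w t₀ : ℝ} {mL mF EL : ℝ → ℝ} (hη : 0 < η)
    (hα0 : 0 < α) (hα1 : α < 1) (hβ0 : 0 ≤ β) (hβ2 : β ≤ 2) (hμ : μ = 1 - ψ)
    (hmL : Tendsto mL atTop (𝓝 w)) (hmF : Tendsto mF atTop (𝓝 w))
    (hEL : ∀ t ∈ Ici t₀,
        HasDerivWithinAt EL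
          (η*(2*α*(α - 1)*(EL t - (mL t)^2)
            - (β/2)*(2 - β)*(EL t + (mL t)^2)
            + 2*β*(1 - β)*(ψ*w + μ*(mF t))*(mL t)
            + β^2*(ψ*w + μ*(mF t))^2)) (Ici t₀) t) :
    Tendsto EL atTop (𝓝 (w^2)) := by
  have hc : 0 < η * (2 * α * (1 - α) + β / 2 * (2 - β)) := by
    have : 0 < 1 - α := by linarith
    have : 0 ≤ 2 - β := by linarith
    positivity
  let G : ℝ × ℝ → ℝ := fun p => η * (2 * α * (1 - α) * p.1 ^ 2 - β / 2 * (2 - β) * p.1 ^ 2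
    + 2 * β * (1 - β) * (ψ * w + μ * p.2) * p.1 + β ^ 2 * (ψ * w + μ * p.2) ^ 2)
  refine tendsto_of_hasDerivWithinAt_sub_mul hc (g := fun t => G (mL t, mF t))
    (fun t ht => (hEL t ht).congr_deriv (by ring)) ?_
  have hG : Tendsto (fun t => G (mL t, mF t)) atTop (𝓝 (G (w, w))) :=
    ((by fun_prop : Continuous G).tendsto _).comp (hmL.prodMk_nhds hmF)
  convert hG using 2
  subst hμ
  ring

theorem tendsto_follower_second_moment {ηF ηFL α w t₀ : ℝ} {mL mF EF EL : ℝ → ℝ}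
    (hηF : 0 ≤ ηF) (hηFL : 0 < ηFL) (hα0 : 0 < α) (hα1 : α ≤ 1)
    (hmL : Tendsto mL atTop (𝓝 w)) (hmF : Tendsto mF atTop (𝓝 w))
    (hEL : Tendsto EL atTop (𝓝 (w^2)))
    (hEF : ∀ t ∈ Ici t₀,
        HasDerivWithinAt EF
          (2*ηF*α*(α - 1)*(EF t - (mF t)^2)
            + ηFL*α^2*(EL t + EF t - 2*(mL t)*(mF t))
            + 2*α*ηFL*((mF t)*(mL t) - EF t)) (Ici t₀) t) :
    Tendsto EF atTop (𝓝 (w^2)) := by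
  have hc : 0 < 2 * ηF * α * (1 - α) + ηFL * α * (2 - α) := by
    have : 0 ≤ 1 - α := by linarith
    have : 0 < 2 - α := by linarith
    positivity
  let G : ℝ × ℝ × ℝ → ℝ := fun p => 2 * ηF * α * (1 - α) * p.2.1 ^ 2
    + ηFL * α ^ 2 * (p.2.2 - 2 * p.1 * p.2.1) + 2 * α * ηFL * p.2.1 * p.1
  refine tendsto_of_hasDerivWithinAt_sub_mul hc (g := fun t => G (mL t, mF t, EL t))
    (fun t ht => (hEF t ht).congr_deriv (by ring)) ?_
  have hG : Tendsto (fun t => G (mL t, mF t, EL t)) atTop (𝓝 (G (w, w, w ^ 2))) :=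
    ((by fun_prop : Continuous G).tendsto _).comp (hmL.prodMk_nhds (hmF.prodMk_nhds hEL))
  convert hG using 2
  ring

theorem Filter.Tendsto.add_sq_sub_two_mul {l : Filter ℝ} {E m : ℝ → ℝ} {w : ℝ}
    (hE : Tendsto E l (𝓝 (w ^ 2))) (hm : Tendsto m l (𝓝 w)) :
    Tendsto (fun t => E t + w ^ 2 - 2 * m t * w) l (𝓝 0) := by
  convert (hE.add_const (w ^ 2)).sub ((hm.const_mul 2).mul_const w) using 2
  ring

/-- for the diffusion-free closed system of the first two
moments, the second moments of followers and leaders converge to `w_d²` and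
the mean-square deviations from the desired opinion vanish in the large-time
limit. -/
theorem second_moments_converge_to_desired
    (ηF ηFL ηL α β ψ μ wd : ℝ)
    (hηF : 0 < ηF) (hηFL : 0 < ηFL) (hηL : 0 < ηL)
    (hα0 : 0 < α) (hα1 : α < 1) (hβ0 : 0 < β) (hβ2 : β < 2)
    (hψ0 : 0 < ψ) (hψ1 : ψ ≤ 1) (hμ : μ = 1 - ψ)
    (mL mF EF EL : ℝ → ℝ)
    (hmL : ∀ t ∈ Ici (0:ℝ),
        HasDerivWithinAt mL (ηL*β*(ψ*(wd - mL t) + μ*(mF t - mL t))) (Ici 0) t)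
    (hmF : ∀ t ∈ Ici (0:ℝ),
        HasDerivWithinAt mF (ηFL*α*(mL t - mF t)) (Ici 0) t)
    (hEF : ∀ t ∈ Ici (0:ℝ),
        HasDerivWithinAt EF
          (2*ηF*α*(α - 1)*(EF t - (mF t)^2)
            + ηFL*α^2*(EL t + EF t - 2*(mL t)*(mF t))
            + 2*α*ηFL*((mF t)*(mL t) - EF t)) (Ici 0) t)
    (hEL : ∀ t ∈ Ici (0:ℝ),
        HasDerivWithinAt EL
          (ηL*(2*α*(α - 1)*(EL t - (mL t)^2)
            - (β/2)*(2 - β)*(EL t + (mL t)^2)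
            + 2*β*(1 - β)*(ψ*wd + μ*(mF t))*(mL t)
            + β^2*(ψ*wd + μ*(mF t))^2)) (Ici 0) t) :
    Tendsto EF atTop (nhds (wd^2))
    ∧ Tendsto EL atTop (nhds (wd^2))
    ∧ Tendsto (fun t => EF t + wd^2 - 2*(mF t)*wd) atTop (nhds 0)
    ∧ Tendsto (fun t => EL t + wd^2 - 2*(mL t)*wd) atTop (nhds 0) := by
  obtain ⟨hmL_lim, hmF_lim⟩ := tendsto_mean_opinions (by positivity) (by positivity) hψ0
    (by linarith) hμ hmL hmF
  have hEL_lim := tendsto_leader_second_moment hηL hα0 hα1 hβ0.le hβ2.le hμ hmL_lim hmF_lim hEL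
  have hEF_lim := tendsto_follower_second_moment hηF.le hηFL hα0 hα1.le hmL_lim hmF_lim
    hEL_lim hEF
  exact ⟨hEF_lim, hEL_lim, hEF_lim.add_sq_sub_two_mul hmF_lim,
    hEL_lim.add_sq_sub_two_mul hmL_lim⟩
end
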